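/- arXiv:0902.1959 — 2 statements merged into one kernel-verified Lean document; each statement's English description precedes it below -/
import Mathlib

section
/- Let p be a prime. For t in ℝ or ℚ_p, let M(t) be the 3×3 matrix with rows (1, 2t, t²), (0, 1, t), (0, 0, 1), let h(s,σ) = (M(s), M(σ)) ∈ SL(3,ℝ)×SL(3,ℚ_p) for (s,σ) ∈ ℝ×ℚ_p, let D(g,g') = max(‖g‖_∞, ‖g'‖_p), and let g₀ = (Id, diag(p,1,p⁻¹)). Then for all sufficiently large integers n, the ratio (Leb⊗μ_p){(s,σ) ∈ ℝ×ℚ_p : D(h(s,σ)·g₀) ≤ p^n} / (Leb⊗μ_p){(s,σ) ∈ ℝ×ℚ_p : D(h(s,σ)) ≤ p^n} equals p^{⌊(n−1)/2⌋ − ⌊n/2⌋}; in particular this ratio equals 1 when n is odd and 1/p when n is even, so it converges along each parity class of n but admits no limit as n → ∞. -/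
/-!
Both sets are products of a real interval and a `p`-adic ball. On the real side `g₀` is trivial,
and for `R ≥ 4` the condition `‖M(s)‖_∞ ≤ R` just says `s² ≤ R`, so the interval factors cancel in
the ratio. On the `p`-adic side `‖M(σ)‖_p ≤ p^n` iff `|σ|_p² ≤ p^n`, while
`‖M(σ) diag(p, 1, p⁻¹)‖_p ≤ p^n` iff `|σ|_p² ≤ p^(n-1)`; since `|σ|_p` is an integral power of `p`,
these are the balls of radii `p^⌊n/2⌋` and `p^⌊(n-1)/2⌋`. Finally a ball of radius `p^k` has
Haar measure `p^k`, because the ball of radius `p^(k+1)` splits into `p` translates of the ball of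
radius `p^k`, one for each value of the corresponding `p`-adic digit.
-/

open MeasureTheory Filter

/-- The max-norm of a square matrix over a normed field (including ℝ and ℚ_p). -/
noncomputable def matSupNorm {n : ℕ} {K : Type*} [NormedField K]
    (g : Matrix (Fin n) (Fin n) K) : ℝ :=
  ((Finset.univ.sup fun i => Finset.univ.sup fun j => ‖g i j‖₊ : NNReal) : ℝ)

noncomputable instance (p : ℕ) [Fact p.Prime] : MeasurableSpace ℚ_[p] := borel _

/-- The real unipotent matrix M(s). -/
noncomputable def MR (s : ℝ) : Matrix (Fin 3) (Fin 3) ℝ :=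
  !![1, 2 * s, s ^ 2; 0, 1, s; 0, 0, 1]

/-- The p-adic unipotent matrix M(σ). -/
noncomputable def MP (p : ℕ) [Fact p.Prime] (σ : ℚ_[p]) : Matrix (Fin 3) (Fin 3) ℚ_[p] :=
  !![1, 2 * σ, σ ^ 2; 0, 1, σ; 0, 0, 1]

/-- The p-adic diagonal matrix diag(p,1,p⁻¹). -/
noncomputable def dP (p : ℕ) [Fact p.Prime] : Matrix (Fin 3) (Fin 3) ℚ_[p] :=
  !![(p : ℚ_[p]), 0, 0; 0, 1, 0; 0, 0, (p : ℚ_[p])⁻¹]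

/-- The size function D on SL(3,ℝ)×SL(3,ℚ_p) (evaluated on pairs of matrices). -/
noncomputable def sizeD (p : ℕ) [Fact p.Prime]
    (g : Matrix (Fin 3) (Fin 3) ℝ) (g' : Matrix (Fin 3) (Fin 3) ℚ_[p]) : ℝ :=
  max (matSupNorm g) (matSupNorm g')

open Metric

instance (p : ℕ) [Fact p.Prime] : BorelSpace ℚ_[p] := ⟨rfl⟩

section MatrixNorms

variable {K : Type*} [NormedField K]

lemma matSupNorm_le_iff {n : ℕ} {g : Matrix (Fin n) (Fin n) K} {C : ℝ} (hC : 0 ≤ C) :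
    matSupNorm g ≤ C ↔ ∀ i j, ‖g i j‖ ≤ C := by
  lift C to NNReal using hC
  simp only [matSupNorm, NNReal.coe_le_coe, Finset.sup_le_iff, Finset.mem_univ, true_imp_iff,
    ← coe_nnnorm]

lemma matSupNorm_unipotent_le_iff (t : K) {R : ℝ} (hR : 1 ≤ R) (h2 : ‖(2 : K)‖ ^ 2 ≤ R) :
    matSupNorm !![1, 2 * t, t ^ 2; 0, 1, t; 0, 0, 1] ≤ R ↔ ‖t‖ ^ 2 ≤ R := by
  rw [matSupNorm_le_iff (by linarith)]
  refine ⟨fun h => by simpa using h 0 2, fun ht i j => ?_⟩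
  fin_cases i <;> fin_cases j <;> simp [hR, zero_le_one.trans hR, ht] <;>
    nlinarith [norm_nonneg (2 : K), norm_nonneg t]

end MatrixNorms

lemma matSupNorm_MR_le_iff (s : ℝ) {R : ℝ} (hR : 4 ≤ R) :
    matSupNorm (MR s) ≤ R ↔ s ∈ Set.Icc (-√R) √R := by
  rw [MR, matSupNorm_unipotent_le_iff s (by linarith) (by norm_num; linarith), Real.norm_eq_abs,
    sq_abs, Real.sq_le (by linarith), Set.mem_Icc]

section Prime

variable {p : ℕ} [Fact p.Prime]

lemma one_lt_natCast_prime : (1 : ℝ) < p := mod_cast (Fact.out : p.Prime).one_lt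

lemma natCast_prime_pos : (0 : ℝ) < p := zero_lt_one.trans one_lt_natCast_prime

end Prime

namespace Padic

variable {p : ℕ} [Fact p.Prime]

lemma norm_two_le_one : ‖(2 : ℚ_[p])‖ ≤ 1 := by
  simpa using norm_int_le_one (p := p) 2

lemma norm_sq_le_pow_iff (σ : ℚ_[p]) (a : ℕ) :
    ‖σ‖ ^ 2 ≤ (p : ℝ) ^ a ↔ ‖σ‖ ≤ (p : ℝ) ^ (a / 2) := by
  rcases eq_or_ne σ 0 with rfl | hσ
  · simp [pow_nonneg]
  have hp := one_lt_natCast_prime (p := p)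
  rw [norm_eq_zpow_neg_valuation hσ, ← zpow_natCast (p : ℝ) a, ← zpow_natCast (p : ℝ) (a / 2),
    ← zpow_natCast ((p : ℝ) ^ (-σ.valuation)) 2, ← zpow_mul,
    zpow_le_zpow_iff_right₀ hp, zpow_le_zpow_iff_right₀ hp]
  omega

lemma norm_div_pow_p (x : ℚ_[p]) (m : ℕ) : ‖x / (p : ℚ_[p]) ^ m‖ = ‖x‖ * (p : ℝ) ^ m := by
  simp [div_eq_mul_inv]

lemma eq_of_norm_natCast_sub_lt_one {a b : ℕ} (ha : a < p) (hb : b < p)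
    (h : ‖(a : ℚ_[p]) - b‖ < 1) : a = b := by
  have hdvd : (p : ℤ) ∣ (a - b : ℤ) := norm_intCast_lt_one_iff.1 (by push_cast; exact h)
  have := Int.eq_zero_of_abs_lt_dvd hdvd (by rw [abs_lt]; omega)
  omega

lemma mem_ball_natCast_div_pow_iff {x : ℚ_[p]} {a m : ℕ} :
    x ∈ ball ((a : ℚ_[p]) / p ^ m) ((p : ℝ) ^ m) ↔ ‖x * p ^ m - a‖ < 1 := by
  have hp : (p : ℚ_[p]) ^ m ≠ 0 := pow_ne_zero _ (Nat.cast_ne_zero.2 (Fact.out : p.Prime).ne_zero)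
  rw [mem_ball, dist_eq_norm, show x - a / p ^ m = (x * p ^ m - a) / p ^ m by field_simp,
    norm_div_pow_p, mul_lt_iff_lt_one_left (pow_pos natCast_prime_pos m)]

lemma closedBall_pow_eq_iUnion_ball (m : ℕ) :
    closedBall (0 : ℚ_[p]) ((p : ℝ) ^ m) =
      ⋃ a ∈ Finset.range p, ball ((a : ℚ_[p]) / p ^ m) ((p : ℝ) ^ m) := by
  ext x
  simp only [mem_closedBall_zero_iff, Set.mem_iUnion, mem_ball_natCast_div_pow_iff,
    Finset.mem_range, exists_prop]
  have hp : (p : ℚ_[p]) ^ m ≠ 0 := pow_ne_zero _ (Nat.cast_ne_zero.2 (Fact.out : p.Prime).ne_zero)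
  rw [show ‖x‖ = ‖x * p ^ m‖ * (p : ℝ) ^ m by rw [← norm_div_pow_p, mul_div_cancel_right₀ _ hp],
    mul_le_iff_le_one_left (pow_pos natCast_prime_pos m)]
  constructor
  · intro h
    let z : ℤ_[p] := ⟨x * p ^ m, h⟩
    exact ⟨z.zmodRepr, z.zmodRepr_lt_p, z.norm_sub_zmodRepr_lt_one⟩
  · rintro ⟨a, -, ha⟩
    calc ‖x * p ^ m‖ = ‖(x * p ^ m - a) + a‖ := by rw [sub_add_cancel]
      _ ≤ max ‖x * p ^ m - a‖ ‖(a : ℚ_[p])‖ := nonarchimedean _ _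
      _ ≤ 1 := max_le ha.le (by simpa using norm_int_le_one (p := p) a)

lemma pairwiseDisjoint_ball_natCast_div_pow (m : ℕ) :
    (Finset.range p : Set ℕ).PairwiseDisjoint
      fun a => ball ((a : ℚ_[p]) / p ^ m) ((p : ℝ) ^ m) := by
  intro a ha b hb hab
  refine Set.disjoint_left.2 fun x hxa hxb => hab ?_
  rw [mem_ball_natCast_div_pow_iff] at hxa hxb
  refine eq_of_norm_natCast_sub_lt_one (Finset.mem_range.1 ha) (Finset.mem_range.1 hb) ?_
  calc ‖(a : ℚ_[p]) - b‖ = ‖(x * p ^ m - b) + -(x * p ^ m - a)‖ := by ring_nf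
    _ ≤ max ‖x * p ^ m - b‖ ‖-(x * p ^ m - a)‖ := nonarchimedean _ _
    _ < 1 := max_lt hxb (by rwa [norm_neg])

lemma ball_pow_succ (k : ℕ) :
    ball (0 : ℚ_[p]) ((p : ℝ) ^ (k + 1)) = closedBall 0 ((p : ℝ) ^ k) := by
  ext x
  simp only [mem_ball_zero_iff, mem_closedBall_zero_iff, ← zpow_natCast,
    norm_le_pow_iff_norm_lt_pow_add_one, Nat.cast_succ]

lemma addHaar_closedBall_pow (μ : Measure ℚ_[p]) [μ.IsAddHaarMeasure]
    (h : μ (closedBall 0 1) = 1) (k : ℕ) :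
    μ (closedBall 0 ((p : ℝ) ^ k)) = (p : ENNReal) ^ k := by
  induction k with
  | zero => simpa using h
  | succ k ih =>
    rw [closedBall_pow_eq_iUnion_ball, measure_biUnion_finset
      (pairwiseDisjoint_ball_natCast_div_pow _) fun _ _ => measurableSet_ball]
    simp only [Measure.addHaar_ball_center, ball_pow_succ, ih, Finset.sum_const,
      Finset.card_range, nsmul_eq_mul]
    rw [pow_succ, mul_comm]

end Padic

section PadicMatrices

variable {p : ℕ} [Fact p.Prime]

lemma matSupNorm_MP_le_iff (σ : ℚ_[p]) {R : ℝ} (hR : 1 ≤ R) :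
    matSupNorm (MP p σ) ≤ R ↔ ‖σ‖ ^ 2 ≤ R :=
  matSupNorm_unipotent_le_iff σ hR
    (by nlinarith [Padic.norm_two_le_one (p := p), norm_nonneg (2 : ℚ_[p])])

lemma matSupNorm_MP_mul_dP_le_iff (σ : ℚ_[p]) {R : ℝ} (hR : 1 ≤ R) :
    matSupNorm (MP p σ * dP p) ≤ p * R ↔ ‖σ‖ ^ 2 ≤ R := by
  have hp := one_lt_natCast_prime (p := p)
  have hsq : ‖σ‖ ^ 2 * p ≤ p * R ↔ ‖σ‖ ^ 2 ≤ R := by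
    rw [mul_comm]
    exact mul_le_mul_iff_right₀ (by positivity)
  rw [matSupNorm_le_iff (by positivity)]
  refine ⟨fun h => hsq.1 ?_, fun h i j => ?_⟩
  · simpa [MP, dP, Matrix.mul_apply, Fin.sum_univ_three, Padic.norm_p] using h 0 2
  have hσ : ‖σ‖ ≤ R := by nlinarith [norm_nonneg σ]
  fin_cases i <;> fin_cases j <;>
    simp [MP, dP, Matrix.mul_apply, Fin.sum_univ_three, Padic.norm_p, hsq.2 h] <;>
    nlinarith [norm_nonneg σ, norm_nonneg (2 : ℚ_[p]), Padic.norm_two_le_one (p := p),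
      inv_le_one_of_one_le₀ hp.le]

end PadicMatrices

lemma MeasureTheory.Measure.toReal_prod_prod_div_toReal_prod_prod {α β : Type*}
    [MeasurableSpace α] [MeasurableSpace β] (μ : Measure α) (ν : Measure β) [SFinite ν]
    {s : Set α} (hs₀ : μ s ≠ 0) (hs : μ s ≠ ⊤) (t t' : Set β) :
    ((μ.prod ν) (s ×ˢ t)).toReal / ((μ.prod ν) (s ×ˢ t')).toReal =
      (ν t).toReal / (ν t').toReal := by
  rw [prod_prod, prod_prod, ENNReal.toReal_mul, ENNReal.toReal_mul,
    mul_div_mul_left _ _ (ENNReal.toReal_ne_zero.2 ⟨hs₀, hs⟩)]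

section SkewBalls

variable {p : ℕ} [Fact p.Prime]

lemma four_le_natCast_prime_pow {n : ℕ} (hn : 2 ≤ n) : (4 : ℝ) ≤ (p : ℝ) ^ n :=
  calc (4 : ℝ) = 2 ^ 2 := by norm_num
    _ ≤ (p : ℝ) ^ 2 := pow_le_pow_left₀ zero_le_two (mod_cast (Fact.out : p.Prime).two_le) 2
    _ ≤ (p : ℝ) ^ n := pow_le_pow_right₀ one_lt_natCast_prime.le hn

lemma setOf_sizeD_le_eq_prod {n : ℕ} (hn : 2 ≤ n) :
    {x : ℝ × ℚ_[p] | sizeD p (MR x.1) (MP p x.2) ≤ (p : ℝ) ^ n} =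
      Set.Icc (-√((p : ℝ) ^ n)) √((p : ℝ) ^ n) ×ˢ closedBall 0 ((p : ℝ) ^ (n / 2)) := by
  ext ⟨s, σ⟩
  simp only [Set.mem_ofPred_eq, sizeD, max_le_iff, Set.mem_prod, mem_closedBall_zero_iff,
    matSupNorm_MR_le_iff s (four_le_natCast_prime_pow hn),
    matSupNorm_MP_le_iff σ (one_le_pow₀ one_lt_natCast_prime.le), Padic.norm_sq_le_pow_iff]

lemma setOf_sizeD_mul_le_eq_prod {n : ℕ} (hn : 2 ≤ n) :
    {x : ℝ × ℚ_[p] | sizeD p (MR x.1 * 1) (MP p x.2 * dP p) ≤ (p : ℝ) ^ n} =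
      Set.Icc (-√((p : ℝ) ^ n)) √((p : ℝ) ^ n) ×ˢ closedBall 0 ((p : ℝ) ^ ((n - 1) / 2)) := by
  have hdP (σ : ℚ_[p]) :
      matSupNorm (MP p σ * dP p) ≤ (p : ℝ) ^ n ↔ ‖σ‖ ^ 2 ≤ (p : ℝ) ^ (n - 1) := by
    rw [← matSupNorm_MP_mul_dP_le_iff σ (one_le_pow₀ one_lt_natCast_prime.le), ← pow_succ',
      Nat.sub_add_cancel (by omega)]
  ext ⟨s, σ⟩
  simp only [Set.mem_ofPred_eq, sizeD, max_le_iff, Set.mem_prod, mem_closedBall_zero_iff, mul_one,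
    matSupNorm_MR_le_iff s (four_le_natCast_prime_pow hn), hdP, Padic.norm_sq_le_pow_iff]

theorem toReal_volume_skewBall_div_toReal_volume_ball (μp : Measure ℚ_[p]) [μp.IsAddHaarMeasure]
    (hμp : μp {x : ℚ_[p] | ‖x‖ ≤ 1} = 1) {n : ℕ} (hn : 2 ≤ n) :
    (((volume : Measure ℝ).prod μp)
        {x : ℝ × ℚ_[p] | sizeD p (MR x.1 * 1) (MP p x.2 * dP p) ≤ (p : ℝ) ^ n}).toReal /
      (((volume : Measure ℝ).prod μp)
        {x : ℝ × ℚ_[p] | sizeD p (MR x.1) (MP p x.2) ≤ (p : ℝ) ^ n}).toReal =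
    (p : ℝ) ^ ((((n - 1) / 2 : ℕ) : ℤ) - ((n / 2 : ℕ) : ℤ)) := by
  have hball : μp (closedBall 0 1) = 1 := by
    rw [← hμp]
    congr 1
    ext
    simp
  have hsqrt : 0 < √((p : ℝ) ^ n) := Real.sqrt_pos.2 (pow_pos natCast_prime_pos n)
  rw [setOf_sizeD_mul_le_eq_prod hn, setOf_sizeD_le_eq_prod hn,
    Measure.toReal_prod_prod_div_toReal_prod_prod _ _ (by simp [hsqrt]) (by simp),
    Padic.addHaar_closedBall_pow μp hball, Padic.addHaar_closedBall_pow μp hball,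
    zpow_sub₀ natCast_prime_pos.ne', zpow_natCast, zpow_natCast]
  simp

end SkewBalls

section Parity

lemma not_tendsto_of_eventually_odd_even {X : Type*} [TopologicalSpace X] [T2Space X]
    {f : ℕ → X} {a b : X} (hab : a ≠ b) (N : ℕ) (hodd : ∀ n, N ≤ n → Odd n → f n = a)
    (heven : ∀ n, N ≤ n → Even n → f n = b) : ¬ ∃ L, Tendsto f atTop (nhds L) := by
  rintro ⟨L, hL⟩
  have hL_odd : L = a := tendsto_nhds_unique
    (hL.comp (tendsto_atTop_atTop.2 fun m => ⟨m, fun k hk => by omega⟩ : Tendsto (2 * · + 1) _ _))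
    (tendsto_const_nhds.congr' (eventually_atTop.2
      ⟨N, fun k hk => (hodd _ (by omega) (odd_two_mul_add_one k)).symm⟩))
  have hL_even : L = b := tendsto_nhds_unique
    (hL.comp (tendsto_atTop_atTop.2 fun m => ⟨m, fun k hk => by omega⟩ : Tendsto (2 * ·) _ _))
    (tendsto_const_nhds.congr' (eventually_atTop.2
      ⟨N, fun k hk => (heven _ (by omega) (even_two_mul k)).symm⟩))
  exact hab (hL_odd.symm.trans hL_even)

lemma zpow_div_two_sub_div_two_of_odd {G : Type*} [GroupWithZero G] (q : G) {n : ℕ}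
    (hn : Odd n) : q ^ ((((n - 1) / 2 : ℕ) : ℤ) - ((n / 2 : ℕ) : ℤ)) = 1 := by
  obtain ⟨k, rfl⟩ := hn
  rw [show (((2 * k + 1 - 1) / 2 : ℕ) : ℤ) - (((2 * k + 1) / 2 : ℕ) : ℤ) = 0 by omega, zpow_zero]

lemma zpow_div_two_sub_div_two_of_even {G : Type*} [GroupWithZero G] (q : G) {n : ℕ}
    (hn : Even n) (hn₀ : n ≠ 0) : q ^ ((((n - 1) / 2 : ℕ) : ℤ) - ((n / 2 : ℕ) : ℤ)) = q⁻¹ := by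
  obtain ⟨k, rfl⟩ := hn
  rw [show (((k + k - 1) / 2 : ℕ) : ℤ) - (((k + k) / 2 : ℕ) : ℤ) = -1 by omega, zpow_neg_one]

lemma parity_of_eq_zpow_div_two_sub_div_two {f : ℕ → ℝ} {q : ℝ} (hq : 1 < q)
    (hf : ∀ n, 2 ≤ n → f n = q ^ ((((n - 1) / 2 : ℕ) : ℤ) - ((n / 2 : ℕ) : ℤ))) :
    (∃ N : ℕ, ∀ n : ℕ, N ≤ n → f n = q ^ ((((n - 1) / 2 : ℕ) : ℤ) - ((n / 2 : ℕ) : ℤ)) ∧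
      (Odd n → f n = 1) ∧ (Even n → f n = 1 / q)) ∧ ¬ ∃ L, Tendsto f atTop (nhds L) := by
  have hodd n (hn : 2 ≤ n) (ho : Odd n) : f n = 1 := by
    rw [hf n hn, zpow_div_two_sub_div_two_of_odd q ho]
  have heven n (hn : 2 ≤ n) (he : Even n) : f n = 1 / q := by
    rw [hf n hn, zpow_div_two_sub_div_two_of_even q he (by omega), one_div]
  refine ⟨⟨2, fun n hn => ⟨hf n hn, hodd n hn, heven n hn⟩⟩,
    not_tendsto_of_eventually_odd_even ?_ 2 hodd heven⟩
  rw [ne_eq, eq_div_iff (by positivity), one_mul]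
  exact hq.ne'

end Parity

theorem stmt5 (p : ℕ) [Fact p.Prime] (μp : Measure ℚ_[p]) [μp.IsAddHaarMeasure]
    (hμp : μp {x : ℚ_[p] | ‖x‖ ≤ 1} = 1) :
    (∃ N : ℕ, ∀ n : ℕ, N ≤ n →
      (((volume : Measure ℝ).prod μp)
          {x : ℝ × ℚ_[p] | sizeD p (MR x.1 * 1) (MP p x.2 * dP p) ≤ (p : ℝ) ^ n}).toReal /
        (((volume : Measure ℝ).prod μp)
          {x : ℝ × ℚ_[p] | sizeD p (MR x.1) (MP p x.2) ≤ (p : ℝ) ^ n}).toReal =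
      (p : ℝ) ^ ((((n - 1) / 2 : ℕ) : ℤ) - ((n / 2 : ℕ) : ℤ)) ∧
      (Odd n →
        (((volume : Measure ℝ).prod μp)
            {x : ℝ × ℚ_[p] | sizeD p (MR x.1 * 1) (MP p x.2 * dP p) ≤ (p : ℝ) ^ n}).toReal /
          (((volume : Measure ℝ).prod μp)
            {x : ℝ × ℚ_[p] | sizeD p (MR x.1) (MP p x.2) ≤ (p : ℝ) ^ n}).toReal = 1) ∧
      (Even n →
        (((volume : Measure ℝ).prod μp)
            {x : ℝ × ℚ_[p] | sizeD p (MR x.1 * 1) (MP p x.2 * dP p) ≤ (p : ℝ) ^ n}).toReal /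
          (((volume : Measure ℝ).prod μp)
            {x : ℝ × ℚ_[p] | sizeD p (MR x.1) (MP p x.2) ≤ (p : ℝ) ^ n}).toReal = 1 / p)) ∧
    ¬ ∃ L : ℝ, Tendsto
        (fun n : ℕ =>
          (((volume : Measure ℝ).prod μp)
              {x : ℝ × ℚ_[p] | sizeD p (MR x.1 * 1) (MP p x.2 * dP p) ≤ (p : ℝ) ^ n}).toReal /
            (((volume : Measure ℝ).prod μp)
              {x : ℝ × ℚ_[p] | sizeD p (MR x.1) (MP p x.2) ≤ (p : ℝ) ^ n}).toReal)
        atTop (nhds L) := by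
  exact parity_of_eq_zpow_div_two_sub_div_two one_lt_natCast_prime
    fun n hn => toReal_volume_skewBall_div_toReal_volume_ball μp hμp hn
end

section
/- For s ∈ ℝ let u_s ∈ SL(2,ℝ) be the matrix with rows (1,s),(0,1). Then for every g ∈ SL(2,ℝ) with entries g_{ij}, the limit lim_{t→∞} (1/(2t)) · Leb{s ∈ ℝ : ‖u_s g‖ ≤ t} exists and equals 1/√(g₂₁² + g₂₂²). In particular, the ratio Leb{s : ‖u_s g‖ ≤ t} / Leb{s : ‖u_s‖ ≤ t} converges to 1/√(g₂₁² + g₂₂²) as t → ∞. -/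
/-!
Multiplying by `u_s` on the left adds `s` times the bottom row `(c, d)` of `g` to its top row, so
`‖u_s g‖²` is a quadratic polynomial in `s` with leading coefficient `c² + d²`. Completing the
square, `{s : ‖u_s g‖ ≤ t}` is, for large `t`, an interval of length
`2 √((t² - K) / (c² + d²))` for some constant `K`, which is asymptotic to `2t / √(c² + d²)`;
here `c² + d² ≠ 0` because `det g = 1`. The ratio statement is the case `g = 1` divided into
the case of `g`.
-/

open MeasureTheory Filter Topology

/-- The Frobenius norm of a real 2×2 matrix. -/
noncomputable def frobNorm (g : Matrix (Fin 2) (Fin 2) ℝ) : ℝ :=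
  Real.sqrt (∑ i, ∑ j, (g i j) ^ 2)

/-- The upper-triangular unipotent matrix u_s. -/
noncomputable def uMat (s : ℝ) : Matrix (Fin 2) (Fin 2) ℝ := !![1, s; 0, 1]

theorem frobNorm_nonneg (g : Matrix (Fin 2) (Fin 2) ℝ) : 0 ≤ frobNorm g :=
  Real.sqrt_nonneg _

theorem frobNorm_uMat_mul_sq (m : Matrix (Fin 2) (Fin 2) ℝ) (s : ℝ) :
    frobNorm (uMat s * m) ^ 2 =
      (m 0 0 + s * m 1 0) ^ 2 + (m 0 1 + s * m 1 1) ^ 2 + m 1 0 ^ 2 + m 1 1 ^ 2 := by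
  rw [frobNorm, Real.sq_sqrt (by positivity)]
  simp only [uMat, Matrix.mul_apply, Matrix.of_apply, Matrix.cons_val', Matrix.cons_val_fin_one,
    Fin.sum_univ_two, Fin.isValue, Matrix.cons_val_zero, Matrix.cons_val_one, one_mul, zero_mul,
    zero_add]
  ring

theorem exists_frobNorm_uMat_mul_eq_sqrt (m : Matrix (Fin 2) (Fin 2) ℝ)
    (hr : m 1 0 ^ 2 + m 1 1 ^ 2 ≠ 0) :
    ∃ s₀ K : ℝ, ∀ s, frobNorm (uMat s * m) = √((m 1 0 ^ 2 + m 1 1 ^ 2) * (s - s₀) ^ 2 + K) := by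
  set r := m 1 0 ^ 2 + m 1 1 ^ 2
  set p := m 0 0 * m 1 0 + m 0 1 * m 1 1
  refine ⟨-p / r, m 0 0 ^ 2 + m 0 1 ^ 2 + r - p ^ 2 / r, fun s => ?_⟩
  rw [← Real.sqrt_sq (frobNorm_nonneg _), frobNorm_uMat_mul_sq]
  congr 1
  field_simp
  ring

theorem setOf_sqrt_quadratic_le_eq_closedBall {α β s₀ t : ℝ} (hα : 0 < α) (ht : 0 ≤ t)
    (hβt : β ≤ t ^ 2) :
    {s : ℝ | √(α * (s - s₀) ^ 2 + β) ≤ t} = Metric.closedBall s₀ √((t ^ 2 - β) / α) := by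
  ext s
  rw [Set.mem_ofPred_eq, Metric.mem_closedBall, Real.dist_eq, Real.sqrt_le_left ht,
    Real.le_sqrt (abs_nonneg _) (div_nonneg (sub_nonneg.2 hβt) hα.le), sq_abs,
    le_div_iff₀' hα, le_sub_iff_add_le]

theorem tendsto_sqrt_sub_div_div_self_atTop (α β : ℝ) :
    Tendsto (fun t : ℝ => √((t ^ 2 - β) / α) / t) atTop (𝓝 (1 / √α)) := by
  have hlim : Tendsto (fun t : ℝ => √((1 - β / t ^ 2) / α)) atTop (𝓝 (1 / √α)) := by
    have hβ : Tendsto (fun t : ℝ => β / t ^ 2) atTop (𝓝 0) :=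
      tendsto_const_nhds.div_atTop (tendsto_pow_atTop two_ne_zero)
    simpa [Real.sqrt_inv] using (((tendsto_const_nhds (x := (1 : ℝ))).sub hβ).div_const α).sqrt
  refine hlim.congr' ?_
  filter_upwards [eventually_gt_atTop 0] with t ht
  rw [← Real.sqrt_sq ht.le, ← Real.sqrt_div' _ (sq_nonneg t), Real.sqrt_sq ht.le]
  congr 1
  field_simp

theorem tendsto_volume_frobNorm_uMat_mul_le_div (m : Matrix (Fin 2) (Fin 2) ℝ)
    (hr : m 1 0 ^ 2 + m 1 1 ^ 2 ≠ 0) :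
    Tendsto (fun t : ℝ => (volume {s : ℝ | frobNorm (uMat s * m) ≤ t}).toReal / (2 * t)) atTop
      (𝓝 (1 / √(m 1 0 ^ 2 + m 1 1 ^ 2))) := by
  obtain ⟨s₀, K, hnorm⟩ := exists_frobNorm_uMat_mul_eq_sqrt m hr
  refine (tendsto_sqrt_sub_div_div_self_atTop _ K).congr' ?_
  filter_upwards [eventually_ge_atTop 0,
    (tendsto_pow_atTop two_ne_zero).eventually_ge_atTop K] with t ht hKt
  simp only [hnorm]
  rw [setOf_sqrt_quadratic_le_eq_closedBall (lt_of_le_of_ne (by positivity) (Ne.symm hr)) ht hKt,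
    Real.volume_closedBall, ENNReal.toReal_ofReal (by positivity), mul_div_mul_left _ _ two_ne_zero]

theorem sq_add_sq_ne_zero_of_det_ne_zero {m : Matrix (Fin 2) (Fin 2) ℝ} (hm : m.det ≠ 0) :
    m 1 0 ^ 2 + m 1 1 ^ 2 ≠ 0 := by
  intro h
  obtain ⟨hc, hd⟩ := (add_eq_zero_iff_of_nonneg (sq_nonneg _) (sq_nonneg _)).1 h
  rw [Matrix.det_fin_two, (pow_eq_zero_iff two_ne_zero).1 hc, (pow_eq_zero_iff two_ne_zero).1 hd]
    at hm
  simp at hm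

theorem stmt9 (g : Matrix.SpecialLinearGroup (Fin 2) ℝ) :
    Tendsto
        (fun t : ℝ =>
          (volume {s : ℝ | frobNorm (uMat s * (g : Matrix (Fin 2) (Fin 2) ℝ)) ≤ t}).toReal /
            (2 * t))
        atTop
        (nhds (1 / Real.sqrt (((g : Matrix (Fin 2) (Fin 2) ℝ) 1 0) ^ 2 +
          ((g : Matrix (Fin 2) (Fin 2) ℝ) 1 1) ^ 2))) ∧
      Tendsto
        (fun t : ℝ =>
          (volume {s : ℝ | frobNorm (uMat s * (g : Matrix (Fin 2) (Fin 2) ℝ)) ≤ t}).toReal /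
            (volume {s : ℝ | frobNorm (uMat s) ≤ t}).toReal)
        atTop
        (nhds (1 / Real.sqrt (((g : Matrix (Fin 2) (Fin 2) ℝ) 1 0) ^ 2 +
          ((g : Matrix (Fin 2) (Fin 2) ℝ) 1 1) ^ 2))) := by
  have hg := tendsto_volume_frobNorm_uMat_mul_le_div _
    (sq_add_sq_ne_zero_of_det_ne_zero (g.det_coe ▸ one_ne_zero))
  have hone : Tendsto (fun t : ℝ => (volume {s : ℝ | frobNorm (uMat s) ≤ t}).toReal / (2 * t))
      atTop (𝓝 1) := by
    simpa using tendsto_volume_frobNorm_uMat_mul_le_div 1 (by simp)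
  have hratio := hg.div hone one_ne_zero
  rw [div_one] at hratio
  refine ⟨hg, hratio.congr' ?_⟩
  filter_upwards [eventually_gt_atTop 0] with t ht
  exact div_div_div_cancel_right₀ (by positivity) _ _
end
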